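/- arXiv:2001.11709 — 5 statements merged into one kernel-verified Lean document; each statement's English description precedes it below -/
import Mathlib

section
/- Let G be a connected directed multigraph on a nonempty finite vertex set V with finite edge set E, and let B be its signed incidence matrix. Then the space ℝ^E of vector fields on G decomposes as the orthogonal direct sum of the kernel of the linear map u ↦ B u (the divergence-free fields) and the range of the linear map f ↦ Bᵀ f (the conservative fields); moreover the space of conservative fields has dimension |V| − 1 and the space of divergence-free fields has dimension |E| − |V| + 1. -/
open Matrix

/-- The signed incidence matrix of the directed multigraph on vertex set `V` with
edge set `E` given by maps `head tail : E → V`. -/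
noncomputable def incidenceMatrix {V E : Type*} [DecidableEq V]
    (head tail : E → V) : Matrix V E ℝ := fun i e =>
  if head e = tail e then 0
  else if i = head e then 1
  else if i = tail e then -1
  else 0

/-- The simple graph underlying the directed multigraph given by `head, tail`:
`u` is adjacent to `v` iff `u ≠ v` and some edge `e` has `{head e, tail e} = {u, v}`. -/
def underlyingGraph {V E : Type*} (head tail : E → V) : SimpleGraph V where
  Adj u v := u ≠ v ∧ ∃ e, (head e = u ∧ tail e = v) ∨ (head e = v ∧ tail e = u)
  symm := by
    constructor
    rintro u v ⟨huv, e, he⟩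
    exact ⟨huv.symm, e, he.symm⟩
  loopless := by
    constructor
    rintro v ⟨hv, -⟩
    exact hv rfl

/-!
`Bᵀ` is the adjoint of `B`, so `(ker B)ᗮ = range Bᵀ`, and `ℝ^E = ker B ⊕ range Bᵀ` gives
`dim ker B + dim range Bᵀ = |E|`. A potential `f` has `Bᵀ f = 0` iff it takes the same value at
both ends of every edge, hence, `G` being connected, iff it is constant: `ker Bᵀ` is the line of
constants, and rank–nullity gives `dim range Bᵀ = |V| - 1`.
-/

namespace Matrix

variable {𝕜 m n : Type*} [RCLike 𝕜] [Fintype m] [Fintype n] [DecidableEq m] [DecidableEq n]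

theorem orthogonal_ker_toEuclideanLin (A : Matrix m n 𝕜) :
    (LinearMap.ker (toEuclideanLin A))ᗮ = LinearMap.range (toEuclideanLin Aᴴ) := by
  rw [toEuclideanLin_conjTranspose_eq_adjoint, LinearMap.orthogonal_ker]

theorem finrank_ker_toEuclideanLin_add_finrank_range_conjTranspose (A : Matrix m n 𝕜) :
    Module.finrank 𝕜 (LinearMap.ker (toEuclideanLin A)) +
      Module.finrank 𝕜 (LinearMap.range (toEuclideanLin Aᴴ)) = Fintype.card n := by
  rw [← orthogonal_ker_toEuclideanLin, Submodule.finrank_add_finrank_orthogonal,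
    finrank_euclideanSpace]

end Matrix

theorem SimpleGraph.Reachable.eq_of_forall_adj {V α : Type*} {G : SimpleGraph V} {f : V → α}
    (h : ∀ u v, G.Adj u v → f u = f v) {u v : V} (huv : G.Reachable u v) : f u = f v := by
  obtain ⟨w⟩ := huv
  induction w with
  | nil => rfl
  | cons hadj _ ih => exact (h _ _ hadj).trans ih

section IncidenceMatrix

variable {V E : Type*} [DecidableEq V] (head tail : E → V)

theorem incidenceMatrix_apply_of_ne {e : E} (he : head e ≠ tail e) (i : V) :
    incidenceMatrix head tail i e =
      (Pi.single (head e) 1 - Pi.single (tail e) 1 : V → ℝ) i := by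
  unfold incidenceMatrix
  by_cases hh : i = head e <;> by_cases ht : i = tail e <;> simp_all

variable [Fintype V]

theorem incidenceMatrix_transpose_mulVec_apply (f : V → ℝ) (e : E) :
    ((incidenceMatrix head tail)ᵀ *ᵥ f) e =
      if head e = tail e then 0 else f (head e) - f (tail e) := by
  split_ifs with he
  · simp [mulVec, dotProduct, incidenceMatrix, he]
  · simp [mulVec, dotProduct, incidenceMatrix_apply_of_ne head tail he, sub_mul, Pi.single_apply]

theorem incidenceMatrix_transpose_mulVec_eq_zero_iff {f : V → ℝ} :
    (incidenceMatrix head tail)ᵀ *ᵥ f = 0 ↔ ∀ e, f (head e) = f (tail e) := by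
  simp only [funext_iff, Pi.zero_apply, incidenceMatrix_transpose_mulVec_apply]
  refine forall_congr' fun e => ?_
  split_ifs with he <;> simp [he, sub_eq_zero]

theorem incidenceMatrix_transpose_mulVec_eq_zero_iff_of_connected
    (hconn : (underlyingGraph head tail).Connected) {f : V → ℝ} :
    (incidenceMatrix head tail)ᵀ *ᵥ f = 0 ↔ ∀ u v, f u = f v := by
  rw [incidenceMatrix_transpose_mulVec_eq_zero_iff]
  refine ⟨fun h u v => (hconn u v).eq_of_forall_adj ?_, fun h e => h _ _⟩
  rintro u v ⟨-, e, ⟨rfl, rfl⟩ | ⟨rfl, rfl⟩⟩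
  · exact h e
  · exact (h e).symm

theorem ker_toEuclideanLin_incidenceMatrix_transpose
    (hconn : (underlyingGraph head tail).Connected) [Nonempty V] :
    LinearMap.ker (toEuclideanLin (incidenceMatrix head tail)ᵀ) =
      ℝ ∙ WithLp.toLp 2 (fun _ => 1) := by
  ext f
  obtain ⟨v₀⟩ := ‹Nonempty V›
  rw [LinearMap.mem_ker, toLpLin_apply, WithLp.toLp_eq_zero,
    incidenceMatrix_transpose_mulVec_eq_zero_iff_of_connected head tail hconn,
    Submodule.mem_span_singleton]
  constructor
  · intro h
    exact ⟨f v₀, by ext v; simp [h v v₀]⟩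
  · rintro ⟨c, rfl⟩ u v
    simp

theorem finrank_range_toEuclideanLin_incidenceMatrix_transpose_add_one
    (hconn : (underlyingGraph head tail).Connected) [Nonempty V] :
    Module.finrank ℝ (LinearMap.range (toEuclideanLin (incidenceMatrix head tail)ᵀ)) + 1 =
      Fintype.card V := by
  have hone : WithLp.toLp 2 (fun _ : V => (1 : ℝ)) ≠ 0 := by
    simp [← WithLp.toLp_zero, funext_iff]
  rw [← finrank_span_singleton (K := ℝ) hone,
    ← ker_toEuclideanLin_incidenceMatrix_transpose head tail hconn,
    LinearMap.finrank_range_add_finrank_ker, finrank_euclideanSpace]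

end IncidenceMatrix

/-- The vector space `ℝ^E` of vector fields on a connected directed multigraph `G`
decomposes as the orthogonal direct sum of the divergence-free fields `ker (u ↦ B u)`
and the conservative fields `range (f ↦ Bᵀ f)`; the conservative fields have
dimension `|V| - 1` and the divergence-free fields dimension `|E| - |V| + 1`. -/
theorem divergence_free_conservative_decomposition
    {V E : Type*} [Fintype V] [Fintype E] [DecidableEq V] [DecidableEq E] [Nonempty V]
    (head tail : E → V) (hconn : (underlyingGraph head tail).Connected)
    (B : Matrix V E ℝ) (hB : B = incidenceMatrix head tail) :
    (LinearMap.ker (Matrix.toEuclideanLin B))ᗮ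
      = LinearMap.range (Matrix.toEuclideanLin Bᵀ) ∧
    Module.finrank ℝ (LinearMap.range (Matrix.toEuclideanLin Bᵀ)) + 1 = Fintype.card V ∧
    Module.finrank ℝ (LinearMap.ker (Matrix.toEuclideanLin B)) + Fintype.card V
      = Fintype.card E + 1 := by
  subst hB
  have hrank := finrank_range_toEuclideanLin_incidenceMatrix_transpose_add_one head tail hconn
  have hsum := finrank_ker_toEuclideanLin_add_finrank_range_conjTranspose
    (incidenceMatrix head tail)
  rw [conjTranspose_eq_transpose_of_trivial] at hsum
  refine ⟨?_, hrank, by omega⟩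
  rw [orthogonal_ker_toEuclideanLin, conjTranspose_eq_transpose_of_trivial]
end

section
/- Let B be the signed incidence matrix of a directed multigraph G and let P be the Moore–Penrose pseudoinverse of Bᵀ. Let γ be the product over E of standard real Gaussian measures (mean 0, variance 1) on ℝ^E. Then the coordinates w = Bᵀ P y of a Gaussian random embedding have covariance matrix Bᵀ P: for all edges i, j ∈ E, ∫ (Bᵀ P y)_i (Bᵀ P y)_j dγ(y) = (Bᵀ P)_{ij}. -/
/-!
The matrix `M = Bᵀ P` is symmetric and idempotent by the Moore–Penrose conditions, i.e. it is
an orthogonal projection. A standard Gaussian vector `y` has identity second-moment matrix, so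
`M y` has second-moment matrix `M Mᵀ = M² = M`.
-/

open Matrix

/-- `P` is the Moore–Penrose pseudoinverse of `A` if the four Moore–Penrose
conditions hold. -/
def IsMoorePenroseInverse {m n : Type*} [Fintype m] [Fintype n]
    (A : Matrix m n ℝ) (P : Matrix n m ℝ) : Prop :=
  A * P * A = A ∧ P * A * P = P ∧ (A * P)ᵀ = A * P ∧ (P * A)ᵀ = P * A

open MeasureTheory ProbabilityTheory

namespace IsMoorePenroseInverse

variable {m n : Type*} [Fintype m] [Fintype n] {A : Matrix m n ℝ} {P : Matrix n m ℝ}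

theorem mul_mul_transpose_self (h : IsMoorePenroseInverse A P) :
    A * P * (A * P)ᵀ = A * P := by
  rw [h.2.2.1, ← Matrix.mul_assoc, h.1]

end IsMoorePenroseInverse

section SecondMoment

variable {ι : Type*} [Fintype ι]

noncomputable def secondMomentMatrix (μ : Measure (ι → ℝ)) : Matrix ι ι ℝ :=
  Matrix.of fun k l => ∫ y, y k * y l ∂μ

theorem integral_mulVec_mul_mulVec {m n : Type*} {μ : Measure (ι → ℝ)}
    (hμ : ∀ k l, Integrable (fun y : ι → ℝ => y k * y l) μ)
    (M : Matrix m ι ℝ) (N : Matrix n ι ℝ) (i : m) (j : n) :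
    ∫ y, (M *ᵥ y) i * (N *ᵥ y) j ∂μ = (M * secondMomentMatrix μ * Nᵀ) i j := by
  have hexpand : ∀ y : ι → ℝ, (M *ᵥ y) i * (N *ᵥ y) j
      = ∑ k, ∑ l, M i k * N j l * (y k * y l) := fun y => by
    simp only [mulVec, dotProduct, Finset.sum_mul_sum]
    exact Finset.sum_congr rfl fun k _ => Finset.sum_congr rfl fun l _ => by ring
  simp_rw [hexpand]
  rw [integral_finsetSum _ fun k _ => integrable_finsetSum _ fun l _ => (hμ k l).const_mul _]
  simp_rw [integral_finsetSum _ fun l _ => (hμ _ l).const_mul _, integral_const_mul]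
  simp only [mul_apply, secondMomentMatrix, of_apply, transpose_apply, Finset.sum_mul]
  rw [Finset.sum_comm]
  exact Finset.sum_congr rfl fun k _ => Finset.sum_congr rfl fun l _ => by ring

end SecondMoment

theorem integral_mul_self_gaussianReal_zero (v : NNReal) :
    ∫ x, x * x ∂gaussianReal 0 v = v := by
  have h := variance_fun_id_gaussianReal (μ := 0) (v := v)
  rw [variance_eq_integral measurable_id'.aemeasurable, integral_id_gaussianReal] at h
  simpa [sq] using h

section StdGaussianPi

variable {ι : Type*} [Fintype ι] (v : NNReal)

local notation "γ" => Measure.pi fun _ : ι => gaussianReal 0 v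

theorem memLp_eval_pi_gaussianReal (k : ι) : MemLp (fun y : ι → ℝ => y k) 2 γ :=
  (memLp_id_gaussianReal' 2 (by norm_num)).comp_measurePreserving (measurePreserving_eval _ k)

theorem integrable_eval_mul_eval_pi_gaussianReal (k l : ι) :
    Integrable (fun y : ι → ℝ => y k * y l) γ :=
  (memLp_eval_pi_gaussianReal v k).integrable_mul (memLp_eval_pi_gaussianReal v l)

theorem secondMomentMatrix_pi_gaussianReal [DecidableEq ι] :
    secondMomentMatrix γ = (v : ℝ) • 1 := by
  ext k l
  rw [secondMomentMatrix, of_apply, Matrix.smul_apply, one_apply, smul_ite, smul_eq_mul, mul_one,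
    smul_zero]
  split_ifs with hkl
  · subst hkl
    rw [integral_comp_eval (f := fun x => x * x) (by fun_prop),
      integral_mul_self_gaussianReal_zero]
  · have hindep : IndepFun (fun y : ι → ℝ => y k) (fun y => y l) γ :=
      (iIndepFun_pi (μ := fun _ => gaussianReal 0 v) (X := fun _ x => x)
        fun _ => aemeasurable_id).indepFun hkl
    rw [hindep.integral_fun_mul_eq_mul_integral
      (memLp_eval_pi_gaussianReal v k).aestronglyMeasurable
      (memLp_eval_pi_gaussianReal v l).aestronglyMeasurable,
      integral_eval (μ := fun _ => gaussianReal 0 v), integral_id_gaussianReal, zero_mul]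

end StdGaussianPi

theorem displacement_covariance_general
    {V E : Type*} [Fintype V] [Fintype E]
    (B : Matrix V E ℝ)
    (P : Matrix V E ℝ) (hP : IsMoorePenroseInverse Bᵀ P)
    (γ : Measure (E → ℝ)) (hγ : γ = Measure.pi fun _ : E => gaussianReal 0 1) :
    ∀ i j : E,
      ∫ y : E → ℝ, (Bᵀ.mulVec (P.mulVec y) i) * (Bᵀ.mulVec (P.mulVec y) j) ∂γ
        = (Bᵀ * P) i j := by
  classical
  intro i j
  subst hγ
  simp_rw [mulVec_mulVec]
  rw [integral_mulVec_mul_mulVec (integrable_eval_mul_eval_pi_gaussianReal 1),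
    secondMomentMatrix_pi_gaussianReal, NNReal.coe_one, one_smul,
    Matrix.mul_one, hP.mul_mul_transpose_self]

/-- The edge displacement coordinates `w = Bᵀ P y` of a Gaussian random embedding,
with `y` sampled from the standard Gaussian product measure `γ` on `ℝ^E`, have
covariance matrix `Bᵀ P`. -/
theorem displacement_covariance
    {V E : Type*} [Fintype V] [Fintype E] [DecidableEq V]
    (head tail : E → V)
    (B : Matrix V E ℝ) (hB : B = incidenceMatrix head tail)
    (P : Matrix V E ℝ) (hP : IsMoorePenroseInverse Bᵀ P)
    (γ : Measure (E → ℝ)) (hγ : γ = Measure.pi fun _ : E => gaussianReal 0 1) :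
    ∀ i j : E,
      ∫ y : E → ℝ, (Bᵀ.mulVec (P.mulVec y) i) * (Bᵀ.mulVec (P.mulVec y) j) ∂γ
        = (Bᵀ * P) i j :=
  displacement_covariance_general B P hP γ hγ
end

section
/- Let B be the signed incidence matrix of a directed multigraph G and let P be the Moore–Penrose pseudoinverse of Bᵀ. Then the matrix P Pᵀ is the Moore–Penrose pseudoinverse of the graph Laplacian L = B Bᵀ; that is, P Pᵀ satisfies the four Moore–Penrose conditions with respect to B Bᵀ. -/
open Matrix

/-!
The Laplacian is `L = Aᵀ A` for `A = Bᵀ`, so this is the general identity `(Aᵀ A)⁺ = A⁺ (A⁺)ᵀ`.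
The symmetry of `A P` and `P A` lets transposes be traded for products:
`Aᵀ A P = (A P A)ᵀ = Aᵀ` and `P A Aᵀ = (A P A)ᵀ = Aᵀ`, whence both `Aᵀ A (P Pᵀ)` and
`(P Pᵀ) Aᵀ A` equal the symmetric idempotent `P A`, and the four conditions follow.
-/

namespace IsMoorePenroseInverse

variable {m n : Type*} [Fintype m] [Fintype n] {A : Matrix m n ℝ} {P : Matrix n m ℝ}

theorem transpose_mul_self_mul (h : IsMoorePenroseInverse A P) : Aᵀ * A * P = Aᵀ := by
  obtain ⟨hAPA, -, hAP, -⟩ := h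
  rw [Matrix.mul_assoc, ← hAP, ← transpose_mul, hAPA]

theorem mul_self_mul_transpose (h : IsMoorePenroseInverse A P) : P * A * Aᵀ = Aᵀ := by
  obtain ⟨hAPA, -, -, hPA⟩ := h
  rw [← hPA, ← transpose_mul, ← Matrix.mul_assoc, hAPA]

theorem transpose_mul_self_mul_mul_transpose (h : IsMoorePenroseInverse A P) :
    Aᵀ * A * (P * Pᵀ) = P * A := by
  rw [← Matrix.mul_assoc, h.transpose_mul_self_mul, ← transpose_mul, h.2.2.2]

theorem mul_transpose_mul_transpose_mul_self (h : IsMoorePenroseInverse A P) :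
    P * Pᵀ * (Aᵀ * A) = P * A := by
  obtain ⟨-, hPAP, hAP, -⟩ := h
  rw [Matrix.mul_assoc, ← Matrix.mul_assoc Pᵀ, ← transpose_mul, hAP, ← Matrix.mul_assoc,
    ← Matrix.mul_assoc, hPAP]

theorem transpose_mul_self (h : IsMoorePenroseInverse A P) :
    IsMoorePenroseInverse (Aᵀ * A) (P * Pᵀ) := by
  have hL := h.transpose_mul_self_mul_mul_transpose
  have hR := h.mul_transpose_mul_transpose_mul_self
  refine ⟨?_, ?_, ?_, ?_⟩
  · rw [hL, ← Matrix.mul_assoc, h.mul_self_mul_transpose]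
  · rw [hR, ← Matrix.mul_assoc, h.2.1]
  · rw [hL, h.2.2.2]
  · rw [hR, h.2.2.2]

end IsMoorePenroseInverse

theorem pinv_laplacian_general
    {V E : Type*} [Fintype V] [Fintype E]
    (B : Matrix V E ℝ)
    (P : Matrix V E ℝ) (hP : IsMoorePenroseInverse Bᵀ P) :
    IsMoorePenroseInverse (B * Bᵀ) (P * Pᵀ) := by
  simpa only [transpose_transpose] using hP.transpose_mul_self

/-- If `P` is the Moore–Penrose pseudoinverse of `Bᵀ`, then `P Pᵀ` is the
Moore–Penrose pseudoinverse of the graph Laplacian `L = B Bᵀ`. -/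
theorem pinv_laplacian
    {V E : Type*} [Fintype V] [Fintype E] [DecidableEq V]
    (head tail : E → V)
    (B : Matrix V E ℝ) (hB : B = incidenceMatrix head tail)
    (P : Matrix V E ℝ) (hP : IsMoorePenroseInverse Bᵀ P) :
    IsMoorePenroseInverse (B * Bᵀ) (P * Pᵀ) :=
  pinv_laplacian_general B P hP
end

section
/- Let B be the signed incidence matrix of a directed multigraph G and let P be the Moore–Penrose pseudoinverse of Bᵀ. Then for every u ∈ ℝ^E, the vertex vector P u is centered: Σ_{i∈V} (P u)_i = 0. -/
/-!
Every column of the incidence matrix sums to zero, so the all-ones vector `𝟙` lies in the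
kernel of `Bᵀ`. The Moore–Penrose identities give `P = P Bᵀ P = (P Bᵀ)ᵀ P = B Pᵀ P`, hence
`𝟙ᵀ P = (Bᵀ 𝟙)ᵀ Pᵀ P = 0` and `∑ᵢ (P u)ᵢ = 𝟙ᵀ P u = 0`.
-/

open Matrix

namespace IsMoorePenroseInverse

variable {m n : Type*} [Fintype m] [Fintype n] {A : Matrix m n ℝ} {P : Matrix n m ℝ}

theorem vecMul_eq_zero_of_mulVec_eq_zero (hP : IsMoorePenroseInverse A P) {x : n → ℝ}
    (hx : A *ᵥ x = 0) : x ᵥ* P = 0 := by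
  obtain ⟨-, hPAP, -, hPA⟩ := hP
  have hP_eq : P = Aᵀ * (Pᵀ * P) := by
    calc P = P * A * P := hPAP.symm
      _ = (P * A)ᵀ * P := by rw [hPA]
      _ = Aᵀ * (Pᵀ * P) := by rw [transpose_mul, Matrix.mul_assoc]
  rw [hP_eq, ← vecMul_vecMul, vecMul_transpose, hx, zero_vecMul]

end IsMoorePenroseInverse

theorem sum_incidenceMatrix_apply {V E : Type*} [Fintype V] [DecidableEq V]
    (head tail : E → V) (e : E) : ∑ i, incidenceMatrix head tail i e = 0 := by
  by_cases hloop : head e = tail e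
  · simp [incidenceMatrix, hloop]
  · have hcol : ∀ i, incidenceMatrix head tail i e =
        (if i = head e then 1 else 0) - (if i = tail e then 1 else 0) := by
      intro i
      by_cases hh : i = head e <;> by_cases ht : i = tail e <;>
        simp_all [incidenceMatrix]
    simp only [hcol, Finset.sum_sub_distrib, Finset.sum_ite_eq', Finset.mem_univ, if_true,
      sub_self]

/-- For every `u ∈ ℝ^E`, the vertex vector `P u` is centered: its coordinates sum
to zero. Here `P` is the Moore–Penrose pseudoinverse of `Bᵀ`. -/
theorem pinv_vertex_vector_centered
    {V E : Type*} [Fintype V] [Fintype E] [DecidableEq V]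
    (head tail : E → V)
    (B : Matrix V E ℝ) (hB : B = incidenceMatrix head tail)
    (P : Matrix V E ℝ) (hP : IsMoorePenroseInverse Bᵀ P) :
    ∀ u : E → ℝ, ∑ i, P.mulVec u i = 0 := by
  intro u
  have hkernel : Bᵀ *ᵥ (fun _ => 1) = 0 := by
    funext e
    simpa [hB, mulVec, dotProduct] using sum_incidenceMatrix_apply head tail e
  calc ∑ i, (P *ᵥ u) i = (fun _ => 1) ⬝ᵥ (P *ᵥ u) := by simp [dotProduct]
    _ = 0 := by rw [dotProduct_mulVec, hP.vecMul_eq_zero_of_mulVec_eq_zero hkernel,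
      zero_dotProduct]
end

section
/- For every integer n ≥ 2, Σ_{j=1}^{n−1} (1/4) · (sin(πj/n))^{−2} = (n² − 1)/12. Equivalently, the trace of the Moore–Penrose pseudoinverse of the Laplacian of the n-cycle — the expected squared norm E(‖x^k‖²) of one coordinate vector of a Gaussian random embedding of the n-cycle — equals (n² − 1)/12. -/
/-!
The numbers `g k = k (k - n) / (2n)` form the Green's function of the Laplacian of the `n`-cycle:
their second difference is `1/n` away from `0` and `1/n - 1` at `0`. Summing by parts twice,
`(2 - ω - ω⁻¹) · ∑ g k ω ^ k = 1` at every nontrivial `n`-th root of unity `ω`, and at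
`ω = exp (2πij/n)` the factor `2 - ω - ω⁻¹` is `4 sin² (πj/n)`. Summing `∑ g k ω ^ k` over all
`n`-th roots of unity gives `n g 0 = 0`, so the sum over the nontrivial ones is
`-∑ g k = (n² - 1)/12`.
-/

open Finset Complex

section RootsOfUnity

variable {K : Type*}

theorem sub_one_mul_sum_range_mul_pow [CommRing K] (ω : K) (c : ℕ → K) (n : ℕ) :
    (ω - 1) * ∑ k ∈ range n, c k * ω ^ k
      = c n * ω ^ n - c 0 - ω * ∑ k ∈ range n, (c (k + 1) - c k) * ω ^ k := by
  induction n with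
  | zero => simp
  | succ m ih =>
    rw [sum_range_succ, sum_range_succ, mul_add, ih]
    ring

theorem geom_sum_eq_zero_of_pow_eq_one [Field K] {ω : K} {n : ℕ} (hωn : ω ^ n = 1)
    (hω : ω ≠ 1) : ∑ k ∈ range n, ω ^ k = 0 := by
  rw [geom_sum_eq hω, hωn, sub_self, zero_div]

theorem IsPrimitiveRoot.sum_range_sum_range_mul_pow [Field K] {ζ : K} {n : ℕ}
    (hζ : IsPrimitiveRoot ζ n) (c : ℕ → K) :
    ∑ j ∈ range n, ∑ k ∈ range n, c k * (ζ ^ j) ^ k = n * c 0 := by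
  rcases n.eq_zero_or_pos with rfl | hn
  · simp
  rw [sum_comm, sum_eq_single_of_mem 0 (mem_range.2 hn)]
  · simp [mul_comm]
  · intro k hk hk0
    have hζkn : (ζ ^ k) ^ n = 1 := by rw [pow_right_comm, hζ.pow_eq_one, one_pow]
    simp_rw [← pow_mul, mul_comm _ k, pow_mul, ← mul_sum]
    rw [geom_sum_eq_zero_of_pow_eq_one hζkn (hζ.pow_ne_one_of_pos_of_lt hk0 (mem_range.1 hk)),
      mul_zero]

end RootsOfUnity

section CycleGreen

variable (K : Type*) [Field K]

def cycleGreen (n k : ℕ) : K := k * (k - n) / (2 * n)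

variable {K}

@[simp]
theorem cycleGreen_zero (n : ℕ) : cycleGreen K n 0 = 0 := by
  simp [cycleGreen]

@[simp]
theorem cycleGreen_self (n : ℕ) : cycleGreen K n n = 0 := by
  simp [cycleGreen]

variable [CharZero K]

theorem sum_range_mul_sub (N : K) (m : ℕ) :
    ∑ k ∈ range m, (k : K) * (k - N) = (m - 1) * m * (2 * m - 1) / 6 - N * m * (m - 1) / 2 := by
  induction m with
  | zero => simp
  | succ m ih => rw [sum_range_succ, ih]; push_cast; ring

theorem sum_range_cycleGreen {n : ℕ} (hn : n ≠ 0) :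
    ∑ k ∈ range n, cycleGreen K n k = -((n : K) ^ 2 - 1) / 12 := by
  have hnK : (n : K) ≠ 0 := Nat.cast_ne_zero.2 hn
  simp only [cycleGreen]
  rw [← sum_div, sum_range_mul_sub]
  field_simp
  ring

theorem sub_one_sq_mul_sum_cycleGreen {n : ℕ} (hn : n ≠ 0) {ω : K} (hωn : ω ^ n = 1)
    (hω : ω ≠ 1) : (ω - 1) ^ 2 * ∑ k ∈ range n, cycleGreen K n k * ω ^ k = -ω := by
  have hnK : (n : K) ≠ 0 := Nat.cast_ne_zero.2 hn
  have hΔ : ∀ k : ℕ, cycleGreen K n (k + 1) - cycleGreen K n k = (2 * k + 1 - n) / (2 * n) := by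
    intro k
    simp only [cycleGreen]
    push_cast
    field_simp
    ring
  have hΔ2 : ∀ k : ℕ, (2 * ((k + 1 : ℕ) : K) + 1 - n) / (2 * n) - (2 * k + 1 - n) / (2 * n)
      = 1 / n := by
    intro k
    push_cast
    field_simp
    ring
  have hfirst : (ω - 1) * ∑ k ∈ range n, cycleGreen K n k * ω ^ k
      = -ω * ∑ k ∈ range n, (2 * k + 1 - n) / (2 * n) * ω ^ k := by
    rw [sub_one_mul_sum_range_mul_pow]
    simp only [hΔ, cycleGreen_zero, cycleGreen_self, zero_mul, sub_zero, zero_sub, neg_mul]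
  have hsecond : (ω - 1) * ∑ k ∈ range n, (2 * k + 1 - n : K) / (2 * n) * ω ^ k = 1 := by
    rw [sub_one_mul_sum_range_mul_pow, hωn]
    simp only [hΔ2, ← mul_sum, geom_sum_eq_zero_of_pow_eq_one hωn hω]
    field_simp
    ring
  calc (ω - 1) ^ 2 * ∑ k ∈ range n, cycleGreen K n k * ω ^ k
      = -ω * ((ω - 1) * ∑ k ∈ range n, (2 * k + 1 - n) / (2 * n) * ω ^ k) := by
        rw [sq, mul_assoc, hfirst]
        ring
    _ = -ω := by rw [hsecond, mul_one]

theorem two_sub_sub_inv_mul_sum_cycleGreen {n : ℕ} (hn : n ≠ 0) {ω : K} (hωn : ω ^ n = 1)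
    (hω : ω ≠ 1) : (2 - ω - ω⁻¹) * ∑ k ∈ range n, cycleGreen K n k * ω ^ k = 1 := by
  have hω0 : ω ≠ 0 := by
    rintro rfl
    exact zero_ne_one ((zero_pow hn).symm.trans hωn)
  have := sub_one_sq_mul_sum_cycleGreen hn hωn hω
  field_simp
  linear_combination -this

end CycleGreen

theorem Complex.four_mul_sin_sq (z : ℂ) :
    4 * sin z ^ 2 = 2 - exp (2 * z * I) - (exp (2 * z * I))⁻¹ := by
  have h := two_cos (2 * z)
  rw [neg_mul] at h
  rw [← exp_neg, sin_sq, cos_sq]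
  linear_combination -h

theorem inv_four_mul_sin_sq_eq_sum_cycleGreen {n : ℕ} (hn : n ≠ 0) {z : ℂ}
    (hzn : exp (2 * z * I) ^ n = 1) (hz : exp (2 * z * I) ≠ 1) :
    (4 * sin z ^ 2)⁻¹ = ∑ k ∈ range n, cycleGreen ℂ n k * exp (2 * z * I) ^ k := by
  rw [four_mul_sin_sq]
  exact (eq_inv_of_mul_eq_one_right (two_sub_sub_inv_mul_sum_cycleGreen hn hzn hz)).symm

/-- For every integer `n ≥ 2`,
`Σ_{j=1}^{n-1} (1/4) csc²(πj/n) = (n² - 1)/12`: the trace of the Moore–Penrose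
pseudoinverse of the Laplacian of the `n`-cycle, i.e. the expected squared norm of a
coordinate vector of a Gaussian random embedding of the `n`-cycle, is `(n² - 1)/12`. -/
theorem sum_csc_sq_eq (n : ℕ) (hn : 2 ≤ n) :
    ∑ j ∈ Finset.Ico 1 n, (1 / 4 : ℝ) * (Real.sin (Real.pi * j / n) ^ 2)⁻¹
      = ((n : ℝ) ^ 2 - 1) / 12 := by
  have hn0 : n ≠ 0 := by omega
  set ζ := exp (2 * Real.pi * I / n)
  have hζ : IsPrimitiveRoot ζ n := isPrimitiveRoot_exp n hn0
  have hterm : ∀ j ∈ Ico 1 n, (1 / 4 : ℂ) * (sin (Real.pi * j / n) ^ 2)⁻¹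
      = ∑ k ∈ range n, cycleGreen ℂ n k * (ζ ^ j) ^ k := by
    intro j hj
    obtain ⟨hj1, hjn⟩ := mem_Ico.1 hj
    have hexp : exp (2 * (Real.pi * j / n) * I) = ζ ^ j := by
      rw [← exp_nat_mul]
      ring_nf
    rw [one_div, ← mul_inv, inv_four_mul_sin_sq_eq_sum_cycleGreen hn0, hexp]
    · rw [hexp, pow_right_comm, hζ.pow_eq_one, one_pow]
    · rw [hexp]
      exact hζ.pow_ne_one_of_pos_of_lt (by omega) hjn
  have hall := hζ.sum_range_sum_range_mul_pow (cycleGreen ℂ n)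
  rw [← sum_range_add_sum_Ico _ (by omega : 1 ≤ n), sum_range_one] at hall
  simp only [pow_zero, one_pow, mul_one, cycleGreen_zero, mul_zero] at hall
  rw [← ofReal_inj]
  push_cast
  rw [sum_congr rfl hterm]
  linear_combination hall - sum_range_cycleGreen (K := ℂ) hn0
end
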